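/- Let 0 ≤ λ₀ < λ₁ ≤ ∞, I = (λ₀, λ₁), and let A ⊆ ℕ^ℕ be measurable and rapidly determined over I, with k-tautologically determined approximating events A_k = {ω : (ω₁,…,ω_k) ∈ B_k} (B_k ⊆ ℕ^k) satisfying P_λ(A Δ A_k) ≤ C e^{−ck} for all k ≥ k₀. For each k let g_k : ℂ → ℂ be the entire function g_k(z) = Σ over (m₁,…,m_k) in the set defining A_k \ A_{k−1} of ∏_{i=1}^k e^{−z} z^{m_i}/m_i!, which agrees with P_λ(A_k \ A_{k−1}) for real λ > 0. Then for every λ ∈ I there exist δ > 0 and constants c₁, c₂ > 0 such that for all sufficiently large k and all z ∈ ℂ with |z − λ| ≤ δ, one has |g_k(z)| ≤ c₁ e^{−c₂ k}. -/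

import Mathlib

open MeasureTheory ProbabilityTheory Filter Topology

/-- `P` is the family of laws of a sequence of i.i.d. Poisson(λ) random variables:
for each `λ > 0`, `P λ` is a probability measure on `ℕ → ℕ` whose finite-dimensional
marginals are finite products of Poisson(λ) distributions.  This characterizes the
countable product of Poisson(λ) measures on `ℕ^ℕ`. -/
def IsPoissonSeedFamily (P : ℝ → Measure (ℕ → ℕ)) : Prop :=
  ∀ lam : ℝ, 0 < lam → IsProbabilityMeasure (P lam) ∧
    ∀ k : ℕ, (P lam).map (fun ω (j : Fin k) => ω j.1)
      = Measure.pi (fun _ : Fin k => poissonMeasure lam.toNNReal)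

/-- The first `k` coordinates `(ω₁, …, ω_k)` of a seed `ω ∈ ℕ^ℕ` (0-indexed). -/
def restrictSeed (k : ℕ) (ω : ℕ → ℕ) : Fin k → ℕ := fun j => ω j.1

/-- An event is `k`-tautologically determined if it is of the form
`{ω : (ω₁, …, ω_k) ∈ B}` for some `B ⊆ ℕ^k`. -/
def TautDetermined (k : ℕ) (A : Set (ℕ → ℕ)) : Prop :=
  ∃ B : Set (Fin k → ℕ), A = {ω | restrictSeed k ω ∈ B}

open scoped ENNReal

/-! With `s = |z|²/λ` and `p_r` the Poisson(`r`) weights, each factor of `g_k` satisfies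
`|e^{-z} z^n / n!| = e^{|z-λ|²/(2λ)} √(p_λ(n) p_s(n))`, so by Cauchy–Schwarz
`|g_k(z)| ≤ e^{k|z-λ|²/(2λ)} √(P_λ(A_k \ A_{k-1}))`. That probability is at most
`P_λ(A Δ A_k) + P_λ(A Δ A_{k-1}) = O(e^{-ck})`, and on the disc `|z-λ|² ≤ λc/2` the prefactor
costs only `e^{ck/4}`. -/

theorem ENNReal.tsum_rpow_half_mul_le {α : Type*} (f g : α → ℝ≥0∞) :
    ∑' a, (f a * g a) ^ (1 / 2 : ℝ) ≤ (∑' a, f a) ^ (1 / 2 : ℝ) * (∑' a, g a) ^ (1 / 2 : ℝ) := by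
  have hsq : ∀ x : ℝ≥0∞, (x ^ (1 / 2 : ℝ)) ^ (2 : ℝ) = x := fun x => by
    rw [← ENNReal.rpow_mul]; norm_num
  rw [ENNReal.tsum_eq_iSup_sum]
  refine iSup_le fun s => ?_
  calc ∑ a ∈ s, (f a * g a) ^ (1 / 2 : ℝ)
      = ∑ a ∈ s, f a ^ (1 / 2 : ℝ) * g a ^ (1 / 2 : ℝ) := by
        simp_rw [ENNReal.mul_rpow_of_nonneg _ _ (by norm_num : (0 : ℝ) ≤ 1 / 2)]
    _ ≤ (∑ a ∈ s, f a) ^ (1 / 2 : ℝ) * (∑ a ∈ s, g a) ^ (1 / 2 : ℝ) := by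
        simpa only [hsq] using ENNReal.inner_le_Lp_mul_Lq s (fun a => f a ^ (1 / 2 : ℝ))
          (fun a => g a ^ (1 / 2 : ℝ)) Real.HolderConjugate.two_two
    _ ≤ (∑' a, f a) ^ (1 / 2 : ℝ) * (∑' a, g a) ^ (1 / 2 : ℝ) := by
        gcongr <;> exact ENNReal.sum_le_tsum s

theorem MeasureTheory.Measure.tsum_rpow_half_mul_singleton_le {α : Type*} [MeasurableSpace α]
    [Countable α] [MeasurableSingletonClass α] (μ ν : Measure α) (S : Set α) :
    ∑' a : S, (μ {a.1} * ν {a.1}) ^ (1 / 2 : ℝ) ≤ μ S ^ (1 / 2 : ℝ) * ν S ^ (1 / 2 : ℝ) := by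
  have hsum : ∀ ρ : Measure α, ∑' a : S, ρ {a.1} = ρ S := fun ρ => by
    simpa using tsum_measure_preimage_singleton (μ := ρ) S.to_countable (f := id)
      (fun _ _ => measurableSet_singleton _)
  simpa only [hsum] using ENNReal.tsum_rpow_half_mul_le (fun a : S => μ {a.1}) (fun a => ν {a.1})

theorem Complex.norm_exp_neg_mul_pow_div_factorial (z : ℂ) {lam : ℝ} (hlam : 0 < lam) (n : ℕ) :
    ‖Complex.exp (-z) * z ^ n / (n.factorial : ℂ)‖ = Real.exp (‖z - lam‖ ^ 2 / (2 * lam)) *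
      √(Real.exp (-lam) * lam ^ n / n.factorial *
        (Real.exp (-(‖z‖ ^ 2 / lam)) * (‖z‖ ^ 2 / lam) ^ n / n.factorial)) := by
  set β := ‖z - lam‖ ^ 2 / (2 * lam)
  have hexp : Real.exp (-lam) * Real.exp (-(‖z‖ ^ 2 / lam)) =
      (Real.exp (-β) * Real.exp (-z.re)) ^ 2 := by
    have hdist : ‖z - lam‖ ^ 2 = ‖z‖ ^ 2 - 2 * lam * z.re + lam ^ 2 := by
      simp only [Complex.sq_norm, Complex.normSq_apply, Complex.sub_re, Complex.sub_im,
        Complex.ofReal_re, Complex.ofReal_im]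
      ring
    rw [← Real.exp_add, ← Real.exp_add, sq (Real.exp _), ← Real.exp_add]
    congr 1
    simp only [β, hdist]
    field_simp
    ring
  have hpow : lam ^ n * (‖z‖ ^ 2 / lam) ^ n = (‖z‖ ^ n) ^ 2 := by
    rw [← mul_pow, mul_div_cancel₀ _ hlam.ne', ← pow_mul, ← pow_mul, mul_comm]
  have hprod : Real.exp (-lam) * lam ^ n / n.factorial *
      (Real.exp (-(‖z‖ ^ 2 / lam)) * (‖z‖ ^ 2 / lam) ^ n / n.factorial)
        = (Real.exp (-β) * ‖Complex.exp (-z) * z ^ n / (n.factorial : ℂ)‖) ^ 2 := by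
    rw [norm_div, norm_mul, norm_pow, Complex.norm_exp, Complex.norm_natCast, Complex.neg_re]
    calc _ = Real.exp (-lam) * Real.exp (-(‖z‖ ^ 2 / lam)) * (lam ^ n * (‖z‖ ^ 2 / lam) ^ n)
          / (n.factorial : ℝ) ^ 2 := by ring
      _ = _ := by rw [hexp, hpow]; ring
  rw [hprod, Real.sqrt_sq (by positivity), ← mul_assoc, ← Real.exp_add, add_neg_cancel,
    Real.exp_zero, one_mul]

theorem Complex.enorm_exp_neg_mul_pow_div_factorial (z : ℂ) {lam : ℝ} (hlam : 0 < lam) (n : ℕ) :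
    ‖Complex.exp (-z) * z ^ n / (n.factorial : ℂ)‖ₑ =
      ENNReal.ofReal (Real.exp (‖z - lam‖ ^ 2 / (2 * lam))) *
        (poissonMeasure lam.toNNReal {n} * poissonMeasure (‖z‖ ^ 2 / lam).toNNReal {n}) ^
          (1 / 2 : ℝ) := by
  rw [poissonMeasure_singleton, poissonMeasure_singleton, ← ENNReal.ofReal_mul (by positivity),
    ENNReal.ofReal_rpow_of_nonneg (by positivity) (by norm_num), ← Real.sqrt_eq_rpow,
    ← ENNReal.ofReal_mul (by positivity), Real.coe_toNNReal _ hlam.le,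
    Real.coe_toNNReal _ (by positivity), ← z.norm_exp_neg_mul_pow_div_factorial hlam, ofReal_norm]

theorem Complex.enorm_prod_exp_neg_mul_pow_div_factorial (z : ℂ) {lam : ℝ} (hlam : 0 < lam)
    {k : ℕ} (m : Fin k → ℕ) :
    ‖∏ i, Complex.exp (-z) * z ^ (m i) / ((m i).factorial : ℂ)‖ₑ =
      ENNReal.ofReal (Real.exp (k * (‖z - lam‖ ^ 2 / (2 * lam)))) *
        (Measure.pi (fun _ : Fin k => poissonMeasure lam.toNNReal) {m} *
          Measure.pi (fun _ : Fin k => poissonMeasure (‖z‖ ^ 2 / lam).toNNReal) {m}) ^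
            (1 / 2 : ℝ) := by
  rw [← ofReal_norm, Complex.norm_prod, ENNReal.ofReal_prod_of_nonneg (fun _ _ => norm_nonneg _)]
  simp_rw [ofReal_norm, z.enorm_exp_neg_mul_pow_div_factorial hlam]
  rw [Finset.prod_mul_distrib, Finset.prod_const, Finset.card_univ, Fintype.card_fin,
    ← ENNReal.ofReal_pow (Real.exp_nonneg _), ← Real.exp_nat_mul,
    ENNReal.prod_rpow_of_nonneg (by norm_num), Finset.prod_mul_distrib, Measure.pi_singleton,
    Measure.pi_singleton]

theorem Complex.norm_tsum_prod_exp_neg_mul_pow_div_factorial_le (z : ℂ) {lam : ℝ} (hlam : 0 < lam)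
    {k : ℕ} (S : Set (Fin k → ℕ)) :
    ‖∑' m : S, ∏ i, Complex.exp (-z) * z ^ (m.1 i) / ((m.1 i).factorial : ℂ)‖ ≤
      Real.exp (k * (‖z - lam‖ ^ 2 / (2 * lam))) *
        √((Measure.pi fun _ : Fin k => poissonMeasure lam.toNNReal).real S) := by
  set μ := Measure.pi fun _ : Fin k => poissonMeasure lam.toNNReal
  set ν := Measure.pi fun _ : Fin k => poissonMeasure (‖z‖ ^ 2 / lam).toNNReal
  rw [← ENNReal.ofReal_le_ofReal_iff (by positivity), ofReal_norm]
  calc ‖∑' m : S, ∏ i, Complex.exp (-z) * z ^ (m.1 i) / ((m.1 i).factorial : ℂ)‖ₑ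
      ≤ ∑' m : S, ‖∏ i, Complex.exp (-z) * z ^ (m.1 i) / ((m.1 i).factorial : ℂ)‖ₑ :=
        enorm_tsum_le_tsum_enorm
    _ = ENNReal.ofReal (Real.exp (k * (‖z - lam‖ ^ 2 / (2 * lam)))) *
          ∑' m : S, (μ {m.1} * ν {m.1}) ^ (1 / 2 : ℝ) := by
        simp_rw [z.enorm_prod_exp_neg_mul_pow_div_factorial hlam, ENNReal.tsum_mul_left]; rfl
    _ ≤ ENNReal.ofReal (Real.exp (k * (‖z - lam‖ ^ 2 / (2 * lam)))) *
          (μ S ^ (1 / 2 : ℝ) * ν S ^ (1 / 2 : ℝ)) := by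
        gcongr; exact μ.tsum_rpow_half_mul_singleton_le ν S
    _ ≤ ENNReal.ofReal (Real.exp (k * (‖z - lam‖ ^ 2 / (2 * lam)))) * μ S ^ (1 / 2 : ℝ) := by
        gcongr
        exact mul_le_of_le_one_right zero_le (ENNReal.rpow_le_one prob_le_one (by norm_num))
    _ = _ := by
        rw [← ofReal_measureReal, ENNReal.ofReal_rpow_of_nonneg measureReal_nonneg (by norm_num),
          ← Real.sqrt_eq_rpow, ← ENNReal.ofReal_mul (Real.exp_nonneg _)]

theorem MeasureTheory.measure_diff_le_measure_symmDiff_add {α : Type*} [MeasurableSpace α]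
    (μ : Measure α) (A E F : Set α) : μ (E \ F) ≤ μ (symmDiff A E) + μ (symmDiff A F) :=
  calc μ (E \ F) ≤ μ (symmDiff E F) := measure_mono (le_sup_left : E \ F ≤ symmDiff E F)
    _ ≤ μ (symmDiff E A ∪ symmDiff A F) := measure_mono (symmDiff_triangle E A F)
    _ ≤ μ (symmDiff A E) + μ (symmDiff A F) := by
        rw [symmDiff_comm E A]; exact measure_union_le _ _

theorem IsPoissonSeedFamily.measure_preimage_restrictSeed {P : ℝ → Measure (ℕ → ℕ)}
    (hP : IsPoissonSeedFamily P) {lam : ℝ} (hlam : 0 < lam) (k : ℕ) (S : Set (Fin k → ℕ)) :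
    P lam {ω | restrictSeed k ω ∈ S} =
      Measure.pi (fun _ : Fin k => poissonMeasure lam.toNNReal) S := by
  rw [← (hP lam hlam).2 k, Measure.map_apply (by fun_prop) S.to_countable.measurableSet]
  rfl

def seedIncrement (B : (k : ℕ) → Set (Fin k → ℕ)) (k : ℕ) : Set (Fin k → ℕ) :=
  {m | m ∈ B k ∧ (fun j : Fin (k - 1) => m (Fin.castLE (Nat.sub_le k 1) j)) ∉ B (k - 1)}

theorem preimage_restrictSeed_seedIncrement (B : (k : ℕ) → Set (Fin k → ℕ)) (k : ℕ) :
    {ω | restrictSeed k ω ∈ seedIncrement B k} =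
      {ω | restrictSeed k ω ∈ B k} \ {ω | restrictSeed (k - 1) ω ∈ B (k - 1)} :=
  rfl

theorem IsPoissonSeedFamily.measureReal_seedIncrement_le {P : ℝ → Measure (ℕ → ℕ)}
    (hP : IsPoissonSeedFamily P) {lam : ℝ} (hlam : 0 < lam) {A : Set (ℕ → ℕ)}
    {B : (k : ℕ) → Set (Fin k → ℕ)} {C c : ℝ} (hC : 0 ≤ C) {k₀ : ℕ}
    (hrap : ∀ k ≥ k₀, P lam (symmDiff A {ω | restrictSeed k ω ∈ B k})
      ≤ ENNReal.ofReal (C * Real.exp (-c * k))) {k : ℕ} (hk : k₀ < k) :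
    (Measure.pi fun _ : Fin k => poissonMeasure lam.toNNReal).real (seedIncrement B k)
      ≤ C * (1 + Real.exp c) * Real.exp (-c * k) := by
  refine ENNReal.toReal_le_of_le_ofReal (by positivity) ?_
  rw [← hP.measure_preimage_restrictSeed hlam, preimage_restrictSeed_seedIncrement]
  calc _ ≤ P lam (symmDiff A {ω | restrictSeed k ω ∈ B k})
        + P lam (symmDiff A {ω | restrictSeed (k - 1) ω ∈ B (k - 1)}) :=
        measure_diff_le_measure_symmDiff_add _ _ _ _
    _ ≤ ENNReal.ofReal (C * Real.exp (-c * k)) + ENNReal.ofReal (C * Real.exp (-c * (k - 1 : ℕ))) :=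
        add_le_add (hrap k hk.le) (hrap (k - 1) (by omega))
    _ = ENNReal.ofReal (C * (1 + Real.exp c) * Real.exp (-c * k)) := by
        rw [← ENNReal.ofReal_add (by positivity) (by positivity), Nat.cast_sub (by omega),
          Nat.cast_one, show -c * (k - 1 : ℝ) = c + -c * k by ring, Real.exp_add]
        ring_nf

theorem uniform_disc_bound_for_differences_general
    (P : ℝ → Measure (ℕ → ℕ)) (hP : IsPoissonSeedFamily P)
    (lam0 lam1 : EReal) (h0 : 0 ≤ lam0)
    (A : Set (ℕ → ℕ))
    (B : (k : ℕ) → Set (Fin k → ℕ))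
    (hrap : ∀ lam : ℝ, lam0 < (lam : EReal) → (lam : EReal) < lam1 →
      ∃ C > (0 : ℝ), ∃ c > (0 : ℝ), ∃ k₀ : ℕ, ∀ k ≥ k₀,
        P lam (symmDiff A {ω | restrictSeed k ω ∈ B k})
          ≤ ENNReal.ofReal (C * Real.exp (-c * k)))
    (g : ℕ → ℂ → ℂ)
    (hg : ∀ k : ℕ, ∀ z : ℂ, g k z =
      ∑' m : {m : Fin k → ℕ // m ∈ B k ∧
          (fun j : Fin (k - 1) => m (Fin.castLE (Nat.sub_le k 1) j)) ∉ B (k - 1)},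
        ∏ i : Fin k, Complex.exp (-z) * z ^ (m.1 i) / ((m.1 i).factorial : ℂ)) :
    ∀ lam : ℝ, lam0 < (lam : EReal) → (lam : EReal) < lam1 →
      ∃ δ > (0 : ℝ), ∃ c₁ > (0 : ℝ), ∃ c₂ > (0 : ℝ), ∃ K : ℕ, ∀ k ≥ K,
        ∀ z : ℂ, ‖z - (lam : ℂ)‖ ≤ δ →
          ‖g k z‖ ≤ c₁ * Real.exp (-c₂ * k) := by
  intro lam hl0 hl1
  have hlam : 0 < lam := EReal.coe_pos.mp (h0.trans_lt hl0)
  obtain ⟨C, hC, c, hc, k₀, hrap⟩ := hrap lam hl0 hl1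
  refine ⟨√(lam * c / 2), by positivity, √(C * (1 + Real.exp c)), by positivity, c / 4,
    by positivity, k₀ + 1, fun k hk z hz => ?_⟩
  have hdisc : ‖z - lam‖ ^ 2 / (2 * lam) ≤ c / 4 := by
    rw [div_le_iff₀ (by positivity)]
    nlinarith [Real.sq_sqrt (by positivity : 0 ≤ lam * c / 2), norm_nonneg (z - lam)]
  have hsqrt : √(Real.exp (-c * k)) = Real.exp (-c * k / 2) := by
    rw [Real.sqrt_eq_iff_mul_self_eq_of_pos (Real.exp_pos _), ← Real.exp_add]; ring_nf
  rw [hg]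
  calc _ ≤ Real.exp (k * (‖z - lam‖ ^ 2 / (2 * lam))) *
        √((Measure.pi fun _ : Fin k => poissonMeasure lam.toNNReal).real (seedIncrement B k)) :=
        z.norm_tsum_prod_exp_neg_mul_pow_div_factorial_le hlam (seedIncrement B k)
    _ ≤ Real.exp (k * (c / 4)) * √(C * (1 + Real.exp c) * Real.exp (-c * k)) := by
        gcongr; exact hP.measureReal_seedIncrement_le hlam hC.le hrap (by omega)
    _ = √(C * (1 + Real.exp c)) * Real.exp (-(c / 4) * k) := by
        rw [Real.sqrt_mul (by positivity), hsqrt, mul_left_comm, ← Real.exp_add]; ring_nf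

/-- For a rapidly determined event `A` with approximating events `A_k = {ω : (ω₁,…,ω_k) ∈ B_k}`,
the entire functions `g_k` extending `λ ↦ P_λ(A_k \ A_{k-1})` satisfy, for every `λ ∈ I`,
a uniform bound `|g_k(z)| ≤ c₁ e^{-c₂ k}` on a disc `|z - λ| ≤ δ` for large `k`. -/
theorem uniform_disc_bound_for_differences
    (P : ℝ → Measure (ℕ → ℕ)) (hP : IsPoissonSeedFamily P)
    (lam0 lam1 : EReal) (h0 : 0 ≤ lam0) (h01 : lam0 < lam1)
    (A : Set (ℕ → ℕ)) (hA : MeasurableSet A)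
    (B : (k : ℕ) → Set (Fin k → ℕ))
    (hrap : ∀ lam : ℝ, lam0 < (lam : EReal) → (lam : EReal) < lam1 →
      ∃ C > (0 : ℝ), ∃ c > (0 : ℝ), ∃ k₀ : ℕ, ∀ k ≥ k₀,
        P lam (symmDiff A {ω | restrictSeed k ω ∈ B k})
          ≤ ENNReal.ofReal (C * Real.exp (-c * k)))
    (g : ℕ → ℂ → ℂ)
    (hg : ∀ k : ℕ, ∀ z : ℂ, g k z =
      ∑' m : {m : Fin k → ℕ // m ∈ B k ∧
          (fun j : Fin (k - 1) => m (Fin.castLE (Nat.sub_le k 1) j)) ∉ B (k - 1)},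
        ∏ i : Fin k, Complex.exp (-z) * z ^ (m.1 i) / ((m.1 i).factorial : ℂ)) :
    ∀ lam : ℝ, lam0 < (lam : EReal) → (lam : EReal) < lam1 →
      ∃ δ > (0 : ℝ), ∃ c₁ > (0 : ℝ), ∃ c₂ > (0 : ℝ), ∃ K : ℕ, ∀ k ≥ K,
        ∀ z : ℂ, ‖z - (lam : ℂ)‖ ≤ δ →
          ‖g k z‖ ≤ c₁ * Real.exp (-c₂ * k) :=
  uniform_disc_bound_for_differences_general P hP lam0 lam1 h0 A B hrap g hg
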